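/- Let f ∈ ℝ^n with f_i ≥ 0 for all i, f ≠ 0, and |{i : f_i > 0}| ≤ n/2. Let m = min over all t ≥ 0 with {i : f_i > t} nonempty of RCC({i : f_i > t}, {i : f_i ≤ t}). Then TV(f) ≥ m · ‖f‖₁. -/

import Mathlib

/-! Coarea argument. Write `C_t = {i | t < f i}`. By the layer-cake formula
`‖f‖₁ = ∫_{t ≥ 0} |C_t| dt`, and since `t ↦ [f j ≤ t < f i]` integrates to `(f i - f j)⁺`, the
symmetry of `W` gives `TV(f) = ∑ᵢⱼ wᵢⱼ (f i - f j)⁺ = ∫ cut(C_t) dt`. For `t ≥ 0` the set `C_t`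
lies in the support of `f`, so it is the smaller side of its cut and
`cut(C_t) = RCC(C_t) |C_t| ≥ m |C_t|`: the integrands compare pointwise. -/

open Finset

/-- Total variation `TV(f) = ½ Σ_{i,j} w_ij |f_i − f_j|`. -/
noncomputable def TV {n : ℕ} (W : Fin n → Fin n → ℝ) (f : Fin n → ℝ) : ℝ :=
  (1 / 2) * ∑ i, ∑ j, W i j * |f i - f j|

/-- Ratio Cheeger cut of the partition `(C, Cᶜ)`. -/
noncomputable def RCC {n : ℕ} (W : Fin n → Fin n → ℝ) (C : Finset (Fin n)) : ℝ :=
  (∑ i ∈ C, ∑ j ∈ Cᶜ, W i j) / min (C.card : ℝ) (Cᶜ.card : ℝ)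

open MeasureTheory

section Coarea

variable {ι : Type*} [Fintype ι]

noncomputable def superlevel (f : ι → ℝ) (t : ℝ) : Finset ι := univ.filter (t < f ·)

def cut [DecidableEq ι] (W : ι → ι → ℝ) (C : Finset ι) : ℝ := ∑ i ∈ C, ∑ j ∈ Cᶜ, W i j

lemma superlevel_anti (f : ι → ℝ) : Antitone (superlevel f) := fun _ _ hst _ hi => by
  simp only [superlevel, mem_filter, mem_univ, true_and] at hi ⊢
  exact hst.trans_lt hi

lemma superlevel_eq_univ {f : ι → ℝ} {t : ℝ} (h : ∀ i, t < f i) : superlevel f t = univ := by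
  simp [superlevel, h]

@[simp] lemma cut_univ [DecidableEq ι] (W : ι → ι → ℝ) : cut W univ = 0 := by
  simp [cut]

lemma card_superlevel_eq_sum_indicator (f : ι → ℝ) (t : ℝ) :
    ((superlevel f t).card : ℝ) = ∑ i, (Set.Iio (f i)).indicator 1 t := by
  simp [superlevel, Set.indicator_apply, sum_boole]

lemma cut_superlevel_eq_sum_indicator [DecidableEq ι] (W : ι → ι → ℝ) (f : ι → ℝ) (t : ℝ) :
    cut W (superlevel f t) = ∑ i, ∑ j, W i j * (Set.Ico (f j) (f i)).indicator 1 t := by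
  simp only [cut, superlevel, compl_filter, sum_filter, Set.indicator_apply, Set.mem_Ico, not_lt]
  refine sum_congr rfl fun i _ => ?_
  split_ifs with hi
  · exact sum_congr rfl fun j _ => by by_cases hj : f j ≤ t <;> simp [hi, hj]
  · simp [hi]

lemma integrable_indicator_one_Ico (a b : ℝ) : Integrable ((Set.Ico a b).indicator (1 : ℝ → ℝ)) :=
  (integrableOn_const measure_Ico_lt_top.ne).integrable_indicator measurableSet_Ico

lemma integrableOn_Ici_indicator_one_Iio (a b : ℝ) :
    IntegrableOn ((Set.Iio b).indicator (1 : ℝ → ℝ)) (Set.Ici a) := by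
  refine IntegrableOn.integrable_indicator (integrableOn_const ?_) measurableSet_Iio
  rw [Measure.restrict_apply measurableSet_Iio, Set.Iio_inter_Ici]
  exact measure_Ico_lt_top.ne

lemma setIntegral_Ici_indicator_one_Iio (a b : ℝ) :
    ∫ t in Set.Ici a, (Set.Iio b).indicator (1 : ℝ → ℝ) t = max (b - a) 0 := by
  rw [integral_indicator_one measurableSet_Iio, measureReal_restrict_apply measurableSet_Iio,
    Set.Iio_inter_Ici, Real.volume_real_Ico]

lemma integrable_cut_superlevel [DecidableEq ι] (W : ι → ι → ℝ) (f : ι → ℝ) :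
    Integrable fun t => cut W (superlevel f t) := by
  simp_rw [cut_superlevel_eq_sum_indicator]
  exact integrable_finsetSum _ fun i _ => integrable_finsetSum _ fun j _ =>
    (integrable_indicator_one_Ico _ _).const_mul _

lemma integrableOn_card_superlevel (f : ι → ℝ) (a : ℝ) :
    IntegrableOn (fun t => ((superlevel f t).card : ℝ)) (Set.Ici a) := by
  simp_rw [card_superlevel_eq_sum_indicator]
  exact integrable_finsetSum _ fun i _ => integrableOn_Ici_indicator_one_Iio _ _

lemma integral_cut_superlevel [DecidableEq ι] (W : ι → ι → ℝ) (f : ι → ℝ) :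
    ∫ t, cut W (superlevel f t) = ∑ i, ∑ j, W i j * max (f i - f j) 0 := by
  simp_rw [cut_superlevel_eq_sum_indicator]
  rw [integral_finsetSum _ fun i _ => integrable_finsetSum _ fun j _ =>
    (integrable_indicator_one_Ico _ _).const_mul _]
  refine sum_congr rfl fun i _ => ?_
  rw [integral_finsetSum _ fun j _ => (integrable_indicator_one_Ico _ _).const_mul _]
  simp [integral_const_mul, integral_indicator_one measurableSet_Ico, Real.volume_real_Ico]

lemma setIntegral_Ici_card_superlevel {f : ι → ℝ} (hf : ∀ i, 0 ≤ f i) :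
    ∫ t in Set.Ici 0, ((superlevel f t).card : ℝ) = ∑ i, f i := by
  simp_rw [card_superlevel_eq_sum_indicator]
  rw [integral_finsetSum _ fun i _ => integrableOn_Ici_indicator_one_Iio _ _]
  exact sum_congr rfl fun i _ => by
    rw [setIntegral_Ici_indicator_one_Iio, sub_zero, max_eq_left (hf i)]

end Coarea

lemma TV_eq_sum_mul_max_sub {n : ℕ} {W : Fin n → Fin n → ℝ} (hsym : ∀ i j, W i j = W j i)
    (f : Fin n → ℝ) : TV W f = ∑ i, ∑ j, W i j * max (f i - f j) 0 := by
  have hswap : ∑ i, ∑ j, W i j * max (f j - f i) 0 = ∑ i, ∑ j, W i j * max (f i - f j) 0 := by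
    rw [sum_comm]
    simp_rw [hsym]
  simp_rw [TV, ← max_zero_add_max_neg_zero_eq_abs_self, neg_sub, mul_add, sum_add_distrib,
    hswap]
  ring

lemma RCC_eq_cut_div_card {n : ℕ} (W : Fin n → Fin n → ℝ) {C : Finset (Fin n)}
    (hC : (C.card : ℝ) ≤ n / 2) : RCC W C = cut W C / C.card := by
  have hcompl : (C.card : ℝ) ≤ Cᶜ.card := by
    rw [card_compl, Nat.cast_sub (card_le_univ C), Fintype.card_fin]
    linarith
  rw [RCC, min_eq_left hcompl, cut]

lemma mul_card_le_cut_of_le_RCC {n : ℕ} (W : Fin n → Fin n → ℝ) {C : Finset (Fin n)} {m : ℝ}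
    (hC : (C.card : ℝ) ≤ n / 2) (hm : C.Nonempty → m ≤ RCC W C) : m * C.card ≤ cut W C := by
  rcases C.eq_empty_or_nonempty with rfl | hne
  · simp [cut]
  · have hpos : (0 : ℝ) < C.card := by exact_mod_cast card_pos.mpr hne
    rw [← le_div_iff₀ hpos, ← RCC_eq_cut_div_card W hC]
    exact hm hne

theorem TV_lower_bound_cheeger_general (n : ℕ)
    (W : Fin n → Fin n → ℝ)
    (hsym : ∀ i j, W i j = W j i)
    (f : Fin n → ℝ) (hfpos : ∀ i, 0 ≤ f i)
    (hhalf : ((Finset.univ.filter (fun i => 0 < f i)).card : ℝ) ≤ n / 2)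
    (m : ℝ)
    (hm : IsLeast {r : ℝ | ∃ t : ℝ, 0 ≤ t ∧
      (Finset.univ.filter (fun i => t < f i)).Nonempty ∧
      r = RCC W (Finset.univ.filter (fun i => t < f i))} m) :
    m * (∑ i, |f i|) ≤ TV W f := by
  have hlevel : ∀ t ∈ Set.Ici (0 : ℝ),
      m * (superlevel f t).card ≤ cut W (superlevel f t) := fun t ht =>
    have hsupp := card_le_card (superlevel_anti f ht)
    mul_card_le_cut_of_le_RCC W ((Nat.cast_le.mpr hsupp).trans hhalf)
      fun hne => hm.2 ⟨t, ht, hne, rfl⟩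
  have hneg : ∀ t ∉ Set.Ici (0 : ℝ), cut W (superlevel f t) = 0 := fun t ht => by
    rw [superlevel_eq_univ fun i => (not_le.mp ht).trans_le (hfpos i), cut_univ]
  calc m * ∑ i, |f i|
      = ∫ t in Set.Ici 0, m * (superlevel f t).card := by
        simp_rw [integral_const_mul, setIntegral_Ici_card_superlevel hfpos, abs_of_nonneg (hfpos _)]
    _ ≤ ∫ t in Set.Ici 0, cut W (superlevel f t) :=
        setIntegral_mono_on ((integrableOn_card_superlevel f 0).const_mul m)
          (integrable_cut_superlevel W f).integrableOn measurableSet_Ici hlevel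
    _ = ∫ t, cut W (superlevel f t) := setIntegral_eq_integral_of_forall_compl_eq_zero hneg
    _ = TV W f := by rw [integral_cut_superlevel, TV_eq_sum_mul_max_sub hsym]

/-- Let `f ≥ 0`, `f ≠ 0`, with at most `n/2` positive entries, and let `m` be the minimum
over all `t ≥ 0` with nonempty super-level set `{i : f_i > t}` of the ratio Cheeger cut of
this super-level set. Then `TV(f) ≥ m · ‖f‖₁`. -/
theorem TV_lower_bound_cheeger (n : ℕ) (hn : 2 ≤ n)
    (W : Fin n → Fin n → ℝ)
    (hsym : ∀ i j, W i j = W j i) (hnonneg : ∀ i j, 0 ≤ W i j)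
    (f : Fin n → ℝ) (hfpos : ∀ i, 0 ≤ f i) (hf : f ≠ 0)
    (hhalf : ((Finset.univ.filter (fun i => 0 < f i)).card : ℝ) ≤ n / 2)
    (m : ℝ)
    (hm : IsLeast {r : ℝ | ∃ t : ℝ, 0 ≤ t ∧
      (Finset.univ.filter (fun i => t < f i)).Nonempty ∧
      r = RCC W (Finset.univ.filter (fun i => t < f i))} m) :
    m * (∑ i, |f i|) ≤ TV W f :=
  TV_lower_bound_cheeger_general n W hsym f hfpos hhalf m hm
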